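/- arXiv:2411.19138 — 4 statements merged into one kernel-verified Lean document; each statement's English description precedes it below -/
import Mathlib

section
/- The second moment of the Fejér kernel satisfies \(\beta(K_m) := \int_{-\pi}^{\pi} y^2 K_m(y)\,dy = \frac{4\log 2}{m+1} + O(m^{-2})\) as \(m\to\infty\). -/
open Finset

noncomputable def fejerKernel (m : ℕ) (s : ℝ) : ℝ :=
  1 / (2 * Real.pi) +
    (1 / Real.pi) * ∑ k ∈ Finset.Icc 1 m, (1 - (k : ℝ) / (m + 1)) * Real.cos (k * s)

/-!
Since `∫_{-π}^{π} y² cos (k y) dy = 4π (-1)^k / k²`, integrating the Fejér kernel termwise gives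
`β(K_m) = π²/3 + 4 ∑_{k ≤ m} (-1)^k / k² + 4/(m+1) ∑_{k ≤ m} (-1)^(k+1) / k`.
The first sum is a partial sum of an alternating series with value `-π²/12` (from `ζ(2) = π²/6`),
so it is within `1/(m+1)²` of its limit; the second differs from `log 2 = ∫₀¹ dx / (1 + x)` by
`± ∫₀¹ x^m / (1 + x) dx`, which is at most `1/(m+1)`. The `π²/3` cancels, leaving `4 log 2 / (m+1)`.
-/

open Real

theorem hasSum_neg_one_pow_div_sq :
    HasSum (fun n : ℕ => (-1 : ℝ) ^ n / n ^ 2) (-(π ^ 2 / 12)) := by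
  have hinj : Function.Injective (fun k : ℕ => 2 * k) := fun a b h => by simpa using h
  -- `(1 + (-1)^n) / n²` vanishes at odd `n` and equals `1 / (2k²)` at `n = 2k`.
  have heven : HasSum (fun n : ℕ => (1 + (-1 : ℝ) ^ n) / n ^ 2) (π ^ 2 / 12) := by
    rw [← hinj.hasSum_iff]
    · rw [show π ^ 2 / 12 = π ^ 2 / 6 / 2 by ring]
      refine (hasSum_zeta_two.div_const 2).congr_fun fun k => ?_
      simp only [Function.comp_apply, pow_mul, neg_one_sq, one_pow]
      push_cast
      ring
    · intro n hn
      have hodd : Odd n := Nat.not_even_iff_odd.mp fun ⟨k, hk⟩ => hn ⟨k, by simp [hk, two_mul]⟩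
      simp [hodd.neg_one_pow]
  rw [show -(π ^ 2 / 12) = π ^ 2 / 12 - π ^ 2 / 6 by ring]
  exact (heven.sub hasSum_zeta_two).congr_fun fun n => by ring

theorem abs_sum_neg_one_pow_div_sq_add_le (m : ℕ) :
    |∑ k ∈ Icc 1 m, (-1 : ℝ) ^ k / k ^ 2 + π ^ 2 / 12| ≤ 1 / ((m : ℝ) + 1) ^ 2 := by
  set f : ℕ → ℝ := fun n => 1 / (n + 1) ^ 2 with hf
  have hanti : Antitone f := fun a b hab => by
    simp only [hf]; gcongr
  have hsumm : Summable f := by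
    simpa [hf] using (summable_nat_add_iff 1).mpr (Real.summable_one_div_nat_pow.mpr one_lt_two)
  have htsum : ∑' n, (-1) ^ n * f n = π ^ 2 / 12 := by
    have h := ((hasSum_nat_add_iff' 1).mpr hasSum_neg_one_pow_div_sq).neg
    rw [sum_range_one, Nat.cast_zero, zero_pow two_ne_zero, div_zero, sub_zero, neg_neg] at h
    refine (h.congr_fun fun n => ?_).tsum_eq
    simp only [hf]; push_cast; ring
  have hpartial : ∑ i ∈ range m, (-1) ^ i * f i = -∑ k ∈ Icc 1 m, (-1 : ℝ) ^ k / k ^ 2 := by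
    rw [← Ico_add_one_right_eq_Icc, sum_Ico_eq_sum_range, Nat.add_sub_cancel, ← sum_neg_distrib]
    refine sum_congr rfl fun i _ => ?_
    simp only [hf]; push_cast; ring
  have h := alternating_series_error_bound f hanti hsumm m
  rwa [htsum, hpartial, sub_neg_eq_add, add_comm] at h

theorem integral_inv_one_add_eq_log_two : ∫ x in (0 : ℝ)..1, (1 + x)⁻¹ = log 2 := by
  rw [intervalIntegral.integral_comp_add_left (fun x => x⁻¹), integral_inv_of_pos] <;> norm_num

theorem sum_range_neg_one_pow_div_succ_sub_log_two (m : ℕ) :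
    ∑ j ∈ range m, (-1 : ℝ) ^ j / (j + 1) - log 2
      = -∫ x in (0 : ℝ)..1, (-x) ^ m / (1 + x) := by
  have hpos : ∀ x ∈ Set.uIcc (0 : ℝ) 1, 1 + x ≠ 0 := fun x hx => by
    rw [Set.uIcc_of_le zero_le_one] at hx; linarith [hx.1]
  have hmoment : ∀ j : ℕ, ∫ x in (0 : ℝ)..1, (-x) ^ j = (-1) ^ j / (j + 1) := fun j => by
    rw [funext fun x : ℝ => neg_pow x j, intervalIntegral.integral_const_mul, integral_pow]
    norm_num [div_eq_mul_inv]
  have hgeom : Set.EqOn (fun x : ℝ => ∑ j ∈ range m, (-x) ^ j - (1 + x)⁻¹)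
      (fun x => -((-x) ^ m / (1 + x))) (Set.uIcc 0 1) := fun x hx => by
    have hne : -x - 1 ≠ 0 := fun h => hpos x hx (by linear_combination -h)
    dsimp only
    rw [geom_sum_eq (fun h => hne (by rw [h]; ring))]
    field_simp [hpos x hx]
    ring
  rw [← integral_inv_one_add_eq_log_two, ← intervalIntegral.integral_neg,
    ← intervalIntegral.integral_congr hgeom, intervalIntegral.integral_sub,
    intervalIntegral.integral_finsetSum]
  · exact congrArg (· - _) (sum_congr rfl fun j _ => (hmoment j).symm)
  · exact fun j _ => (continuous_neg.pow j).intervalIntegrable _ _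
  · exact (continuous_finsetSum _ fun j _ => continuous_neg.pow j).intervalIntegrable _ _
  · exact intervalIntegral.intervalIntegrable_inv hpos (by fun_prop)

theorem abs_integral_neg_pow_div_one_add_le (m : ℕ) :
    |∫ x in (0 : ℝ)..1, (-x) ^ m / (1 + x)| ≤ 1 / (m + 1) := by
  have h := intervalIntegral.norm_integral_le_of_norm_le zero_le_one (μ := MeasureTheory.volume)
    (f := fun x : ℝ => (-x) ^ m / (1 + x)) (g := fun x => x ^ m)
    (Filter.Eventually.of_forall fun x hx => ?_) ((continuous_pow m).intervalIntegrable _ _)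
  · simpa [integral_pow] using h
  · rw [Real.norm_eq_abs, abs_div, abs_pow, abs_neg, abs_of_pos hx.1,
      abs_of_pos (by linarith [hx.1])]
    exact div_le_self (pow_nonneg hx.1.le m) (by linarith [hx.1])

theorem abs_sum_neg_one_pow_succ_div_sub_log_two_le (m : ℕ) :
    |∑ k ∈ Icc 1 m, (-1 : ℝ) ^ (k + 1) / k - log 2| ≤ 1 / ((m : ℝ) + 1) := by
  have hreindex : ∑ k ∈ Icc 1 m, (-1 : ℝ) ^ (k + 1) / k
      = ∑ j ∈ range m, (-1 : ℝ) ^ j / (j + 1) := by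
    rw [← Ico_add_one_right_eq_Icc, sum_Ico_eq_sum_range, Nat.add_sub_cancel]
    refine sum_congr rfl fun j _ => ?_
    push_cast; ring
  rw [hreindex, sum_range_neg_one_pow_div_succ_sub_log_two, abs_neg]
  exact abs_integral_neg_pow_div_one_add_le m

theorem integral_sq_mul_cos_nat_mul {k : ℕ} (hk : k ≠ 0) :
    ∫ y in (-π)..π, y ^ 2 * cos (k * y) = 4 * π * (-1) ^ k / k ^ 2 := by
  set a : ℝ := (k : ℝ)
  have ha : a ≠ 0 := Nat.cast_ne_zero.mpr hk
  have hderiv : ∀ y : ℝ, HasDerivAt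
      (fun y => (y ^ 2 / a - 2 / a ^ 3) * sin (a * y) + 2 * y / a ^ 2 * cos (a * y))
      (y ^ 2 * cos (a * y)) y := fun y => by
    have hlin : HasDerivAt (fun y : ℝ => a * y) a y := by
      simpa using (hasDerivAt_id y).const_mul a
    have h := ((((hasDerivAt_pow 2 y).div_const a).sub_const (2 / a ^ 3)).mul
      ((hasDerivAt_sin _).comp y hlin)).add
      ((((hasDerivAt_id y).const_mul 2).div_const (a ^ 2)).mul ((hasDerivAt_cos _).comp y hlin))
    refine h.congr_deriv ?_
    simp only [Function.comp_apply, id]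
    field_simp
    ring
  rw [intervalIntegral.integral_eq_sub_of_hasDerivAt (fun y _ => hderiv y)
    ((by fun_prop : Continuous fun y : ℝ => y ^ 2 * cos (a * y)).intervalIntegrable _ _)]
  have hsin : sin (a * π) = 0 := sin_nat_mul_pi k
  have hcos : cos (a * π) = (-1) ^ k := by simpa using cos_nat_mul_pi_sub 0 k
  simp only [mul_neg, sin_neg, cos_neg, hsin, hcos]
  field_simp
  ring

theorem integral_sq_mul_fejerKernel (m : ℕ) :
    ∫ y in (-π)..π, y ^ 2 * fejerKernel m y
      = π ^ 2 / 3 + 4 * ∑ k ∈ Icc 1 m, (1 - (k : ℝ) / (m + 1)) * ((-1) ^ k / k ^ 2) := by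
  have hexpand : (fun y => y ^ 2 * fejerKernel m y) = fun y => y ^ 2 / (2 * π)
      + ∑ k ∈ Icc 1 m, (1 - (k : ℝ) / (m + 1)) / π * (y ^ 2 * cos (k * y)) := by
    ext y
    simp only [fejerKernel, mul_add, mul_sum]
    congr 1 <;> [ring; exact sum_congr rfl fun k _ => by ring]
  have hcont : ∀ k : ℕ, Continuous fun y : ℝ =>
      (1 - (k : ℝ) / (m + 1)) / π * (y ^ 2 * cos (k * y)) := fun k => by fun_prop
  rw [hexpand, intervalIntegral.integral_add, intervalIntegral.integral_finsetSum,
    intervalIntegral.integral_div, integral_pow, mul_sum]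
  · congr 1
    · field_simp; ring
    · refine sum_congr rfl fun k hk => ?_
      rw [intervalIntegral.integral_const_mul,
        integral_sq_mul_cos_nat_mul (by have := (mem_Icc.mp hk).1; omega)]
      field_simp
  · exact fun k _ => (hcont k).intervalIntegrable _ _
  · exact (by fun_prop : Continuous fun y : ℝ => y ^ 2 / (2 * π)).intervalIntegrable _ _
  · exact (continuous_finsetSum _ fun k _ => hcont k).intervalIntegrable _ _

theorem sum_fejer_weight_mul_neg_one_pow_div_sq (m : ℕ) :
    ∑ k ∈ Icc 1 m, (1 - (k : ℝ) / (m + 1)) * ((-1) ^ k / k ^ 2)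
      = ∑ k ∈ Icc 1 m, (-1 : ℝ) ^ k / k ^ 2
        + 1 / (m + 1) * ∑ k ∈ Icc 1 m, (-1 : ℝ) ^ (k + 1) / k := by
  rw [mul_sum, ← sum_add_distrib]
  refine sum_congr rfl fun k hk => ?_
  have hk : (k : ℝ) ≠ 0 := Nat.cast_ne_zero.mpr (by have := (mem_Icc.mp hk).1; omega)
  field_simp
  ring

theorem fejerKernel_second_moment :
    ∃ C : ℝ, 0 < C ∧ ∀ m : ℕ, 1 ≤ m →
      |(∫ y in (-Real.pi)..Real.pi, y ^ 2 * fejerKernel m y)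
          - 4 * Real.log 2 / (m + 1)| ≤ C / (m : ℝ) ^ 2 := by
  refine ⟨8, by norm_num, fun m hm => ?_⟩
  have hm₀ : (0 : ℝ) < m := by exact_mod_cast hm
  set E₁ := ∑ k ∈ Icc 1 m, (-1 : ℝ) ^ k / k ^ 2 + π ^ 2 / 12
  set E₂ := ∑ k ∈ Icc 1 m, (-1 : ℝ) ^ (k + 1) / k - log 2
  have hE₁ : |E₁| ≤ 1 / ((m : ℝ) + 1) ^ 2 := abs_sum_neg_one_pow_div_sq_add_le m
  have hE₂ : |E₂| ≤ 1 / ((m : ℝ) + 1) := abs_sum_neg_one_pow_succ_div_sub_log_two_le m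
  have hdecomp : (∫ y in (-π)..π, y ^ 2 * fejerKernel m y) - 4 * log 2 / (m + 1)
      = 4 * E₁ + 4 / (m + 1) * E₂ := by
    rw [integral_sq_mul_fejerKernel, sum_fejer_weight_mul_neg_one_pow_div_sq]
    field_simp
    ring
  rw [hdecomp]
  calc |4 * E₁ + 4 / (m + 1) * E₂| ≤ 4 * |E₁| + 4 / (m + 1) * |E₂| := by
        refine (abs_add_le _ _).trans_eq ?_
        rw [abs_mul, abs_mul, abs_of_pos (by positivity : (0 : ℝ) < 4),
          abs_of_pos (by positivity : (0 : ℝ) < 4 / (m + 1))]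
    _ ≤ 4 * (1 / (m + 1) ^ 2) + 4 / (m + 1) * (1 / (m + 1)) := by gcongr
    _ = 8 / (m + 1) ^ 2 := by field_simp; ring
    _ ≤ 8 / (m : ℝ) ^ 2 := by gcongr; linarith
end

section
/- The third absolute moment of the Fejér kernel satisfies \(\gamma(K_m) := \int_{-\pi}^{\pi} |y|^3 K_m(y)\,dy = \frac{6\pi\log 2 - 21\zeta(3)/\pi}{m+1} + O(m^{-2})\) as \(m\to\infty\). -/
open Finset

noncomputable def zeta3 : ℝ := ∑' n : ℕ, 1 / ((n : ℝ) + 1) ^ 3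

open Filter Topology Real intervalIntegral

/-!
Expanding the kernel, `γ(K_m) = π³/4 + π⁻¹ ∑_{k ≤ m} (1 - k/(m+1)) c_k` with
`c_k = ∫_{-π}^{π} |y|³ cos (k y) = 6π²(-1)^k/k² - 12(-1)^k/k⁴ + 12/k⁴`, and the Fejér weights
split the sum as `∑ c_k - (∑ k c_k)/(m+1)`. By `ζ(2), ζ(4)` and the alternating `η(2), η(4)`,
the full series `∑ c_k = -π⁴/4` cancels `π³/4`; by `η(1) = log 2`, `η(3) = 3ζ(3)/4` and `ζ(3)`,
the full series `∑ k c_k = 21ζ(3) - 6π² log 2` gives the main term. The tails after `m` are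
`O(m⁻²)` and `O(m⁻¹)` (alternating series error bounds, and telescoping for the positive
series), so the remainder is `O(m⁻²)`.
-/

theorem sum_Icc_one_eq_sum_range_succ {M : Type*} [AddCommMonoid M] (f : ℕ → M) (m : ℕ) :
    ∑ k ∈ Icc 1 m, f k = ∑ i ∈ range m, f (i + 1) := by
  rw [range_eq_Ico, sum_Ico_add' f 0 m 1]
  rfl

theorem abs_linear_combination_sub_le (a b c x y z x' y' z' : ℝ) :
    |(a * x + b * y + c * z) - (a * x' + b * y' + c * z')|
      ≤ |a| * |x - x'| + |b| * |y - y'| + |c| * |z - z'| := by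
  rw [show (a * x + b * y + c * z) - (a * x' + b * y' + c * z')
      = a * (x - x') + b * (y - y') + c * (z - z') by ring, ← abs_mul, ← abs_mul, ← abs_mul]
  exact abs_add_three _ _ _

/-- Unlike `alternating_series_error_bound`, this does not need `f` to be summable, so it
applies to the alternating harmonic series. -/
theorem Antitone.abs_sub_sum_range_alternating_le {f : ℕ → ℝ} {l : ℝ}
    (hfl : Tendsto (fun n ↦ ∑ i ∈ range n, (-1) ^ i * f i) atTop (𝓝 l)) (hfa : Antitone f)
    (n : ℕ) : |l - ∑ i ∈ range n, (-1) ^ i * f i| ≤ f n := by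
  rw [abs_le]
  obtain ⟨k, rfl | rfl⟩ := Nat.even_or_odd' n
  · have lower := hfa.alternating_series_le_tendsto hfl k
    have upper := hfa.tendsto_le_alternating_series hfl k
    rw [sum_range_succ, pow_mul, neg_one_sq, one_pow, one_mul] at upper
    constructor <;> linarith
  · have upper := hfa.tendsto_le_alternating_series hfl k
    have lower := hfa.alternating_series_le_tendsto hfl (k + 1)
    rw [Nat.mul_succ, sum_range_succ, pow_succ, pow_mul, neg_one_sq, one_pow] at lower
    constructor <;> linarith

theorem antitone_one_div_succ_pow (p : ℕ) : Antitone fun i : ℕ ↦ 1 / ((i : ℝ) + 1) ^ p :=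
  fun _ _ hij ↦ by dsimp only; gcongr

theorem antitone_one_div_succ : Antitone fun i : ℕ ↦ 1 / ((i : ℝ) + 1) := by
  simpa using antitone_one_div_succ_pow 1

theorem sum_range_two_mul_alternating_one_div_succ (n : ℕ) :
    ∑ i ∈ range (2 * n), (-1 : ℝ) ^ i * (1 / ((i : ℝ) + 1))
      = harmonic (2 * n) - harmonic n := by
  induction n with
  | zero => simp
  | succ n ih =>
    rw [Nat.mul_succ, sum_range_succ, sum_range_succ, ih, harmonic_succ, harmonic_succ,
      harmonic_succ, pow_succ, pow_mul, neg_one_sq, one_pow]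
    push_cast
    field_simp
    ring

theorem tendsto_sum_range_alternating_one_div_succ :
    Tendsto (fun n ↦ ∑ i ∈ range n, (-1 : ℝ) ^ i * (1 / ((i : ℝ) + 1))) atTop (𝓝 (log 2)) := by
  obtain ⟨l, hl⟩ := antitone_one_div_succ.tendsto_alternating_series_of_tendsto_zero
    tendsto_one_div_add_atTop_nhds_zero_nat
  have htwo : Tendsto (2 * ·) atTop atTop := tendsto_id.const_mul_atTop' two_pos
  suffices l = log 2 from this ▸ hl
  refine tendsto_nhds_unique (hl.comp htwo) ?_
  have hharmonic :=
    ((tendsto_harmonic_sub_log.comp htwo).sub tendsto_harmonic_sub_log).add_const (log 2)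
  rw [sub_self, zero_add] at hharmonic
  refine hharmonic.congr' ?_
  filter_upwards [eventually_ne_atTop 0] with n hn
  simp only [Function.comp_apply, sum_range_two_mul_alternating_one_div_succ]
  push_cast
  rw [log_mul two_ne_zero (by exact_mod_cast hn)]
  ring

theorem hasSum_one_div_succ_pow_of_hasSum {p : ℕ} (hp : p ≠ 0) {M : ℝ}
    (h : HasSum (fun n : ℕ ↦ 1 / (n : ℝ) ^ p) M) :
    HasSum (fun n : ℕ ↦ 1 / ((n : ℝ) + 1) ^ p) M := by
  simpa [hp] using (hasSum_nat_add_iff' 1).2 h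

theorem HasSum.alternating_one_div_succ_pow {p : ℕ} {M : ℝ}
    (h : HasSum (fun n : ℕ ↦ 1 / ((n : ℝ) + 1) ^ p) M) :
    HasSum (fun n : ℕ ↦ (-1) ^ n * (1 / ((n : ℝ) + 1) ^ p)) ((1 - 2 / 2 ^ p) * M) := by
  set f : ℕ → ℝ := fun n ↦ 1 / ((n : ℝ) + 1) ^ p
  have hodd : HasSum (fun k ↦ f (2 * k + 1)) (M / 2 ^ p) := by
    have hscale : (fun k ↦ f (2 * k + 1)) = fun k ↦ f k / 2 ^ p := by
      funext k
      simp only [f]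
      push_cast
      rw [div_div, ← mul_pow]
      ring_nf
    exact hscale ▸ h.div_const (2 ^ p)
  have heven : HasSum (fun k ↦ f (2 * k)) (M - M / 2 ^ p) := by
    have hs : Summable fun k ↦ f (2 * k) :=
      h.summable.comp_injective (mul_right_injective₀ two_ne_zero)
    convert hs.hasSum using 1
    linarith [h.unique (hs.hasSum.even_add_odd hodd)]
  have halt := HasSum.even_add_odd (f := fun n ↦ (-1) ^ n * f n)
    (by simpa [pow_mul] using heven) (by simpa [pow_succ, pow_mul] using hodd.neg)
  convert halt using 1
  ring

theorem sub_sum_range_le_of_le_sub_succ {f g : ℕ → ℝ} {l : ℝ} {n : ℕ}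
    (hl : Tendsto (fun N ↦ ∑ i ∈ range N, f i) atTop (𝓝 l))
    (hfg : ∀ i, n ≤ i → f i ≤ g i - g (i + 1)) (hg : ∀ i, n ≤ i → 0 ≤ g i) :
    l - ∑ i ∈ range n, f i ≤ g n := by
  have telescope : ∀ N, n ≤ N → ∑ i ∈ range N, f i - ∑ i ∈ range n, f i ≤ g n - g N := by
    intro N hN
    induction N, hN using Nat.le_induction with
    | base => simp
    | succ N hN ih => rw [sum_range_succ]; linarith [hfg N hN]
  refine le_of_tendsto (hl.sub_const _) ?_
  filter_upwards [eventually_ge_atTop n] with N hN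
  linarith [telescope N hN, hg N hN]

theorem abs_sub_sum_range_one_div_succ_pow_le {q m : ℕ} {M : ℝ} (hm : m ≠ 0)
    (h : HasSum (fun i : ℕ ↦ 1 / ((i : ℝ) + 1) ^ (q + 2)) M) :
    |M - ∑ i ∈ range m, 1 / ((i : ℝ) + 1) ^ (q + 2)| ≤ 1 / (m : ℝ) ^ (q + 1) := by
  have hm' : (1 : ℝ) ≤ m := by exact_mod_cast Nat.one_le_iff_ne_zero.2 hm
  rw [abs_of_nonneg (sub_nonneg.2 (sum_le_hasSum _ (fun i _ ↦ by positivity) h))]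
  have tail := sub_sum_range_le_of_le_sub_succ h.tendsto_sum_nat
    (g := fun i ↦ 1 / ((m : ℝ) ^ q * i)) (n := m) ?_ (fun _ _ ↦ by positivity)
  · simpa [pow_succ] using tail
  intro i hi
  have hi' : (m : ℝ) ≤ i := by exact_mod_cast hi
  have hi0 : (0 : ℝ) < i := by linarith
  have : 1 / ((m : ℝ) ^ q * i) - 1 / ((m : ℝ) ^ q * ((i + 1 : ℕ) : ℝ))
      = 1 / ((m : ℝ) ^ q * i * (i + 1)) := by
    push_cast
    field_simp
    ring
  rw [this, pow_succ, pow_succ]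
  gcongr <;> linarith

theorem integral_neg_self_eq_two_mul_of_even {f : ℝ → ℝ} (hf : Continuous f)
    (heven : ∀ x, f (-x) = f x) (a : ℝ) :
    ∫ x in -a..a, f x = 2 * ∫ x in 0..a, f x := by
  have hreflect : ∫ x in -a..0, f x = ∫ x in 0..a, f x := by
    simpa [heven] using (integral_comp_neg (a := 0) (b := a) f).symm
  rw [← integral_add_adjacent_intervals (b := 0) (hf.intervalIntegrable _ _)
    (hf.intervalIntegrable _ _), hreflect, two_mul]

theorem integral_abs_pow_mul_cos (n : ℕ) (c : ℝ) {a : ℝ} (ha : 0 ≤ a) :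
    ∫ y in -a..a, |y| ^ n * cos (c * y) = 2 * ∫ y in 0..a, y ^ n * cos (c * y) := by
  rw [integral_neg_self_eq_two_mul_of_even (by fun_prop)
    (fun y ↦ by rw [abs_neg, mul_neg, cos_neg])]
  congr 1
  refine integral_congr fun y hy ↦ ?_
  rw [Set.uIcc_of_le ha] at hy
  simp only [abs_of_nonneg hy.1]

theorem integral_pow_three_mul_cos_nat_mul {k : ℕ} (hk : k ≠ 0) :
    ∫ y in 0..π, y ^ 3 * cos (k * y)
      = 3 * π ^ 2 * (-1) ^ k / k ^ 2 - 6 * (-1) ^ k / k ^ 4 + 6 / k ^ 4 := by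
  set c : ℝ := (k : ℝ)
  have hc : c ≠ 0 := Nat.cast_ne_zero.2 hk
  have hderiv : ∀ y, HasDerivAt
      (fun y ↦ (y ^ 3 / c - 6 * y / c ^ 3) * sin (c * y)
        + (3 * y ^ 2 / c ^ 2 - 6 / c ^ 4) * cos (c * y))
      (y ^ 3 * cos (c * y)) y := by
    intro y
    have hlin : HasDerivAt (fun y ↦ c * y) c y := by simpa using (hasDerivAt_id y).const_mul c
    have hsin_coeff := ((hasDerivAt_pow 3 y).div_const c).sub
      (((hasDerivAt_id y).const_mul 6).div_const (c ^ 3))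
    have hcos_coeff := (((hasDerivAt_pow 2 y).const_mul 3).div_const (c ^ 2)).sub_const (6 / c ^ 4)
    refine ((hsin_coeff.mul ((hasDerivAt_sin _).comp y hlin)).add
      (hcos_coeff.mul ((hasDerivAt_cos _).comp y hlin))).congr_deriv ?_
    simp only [Function.comp_apply, Pi.sub_apply, id]
    field_simp
    ring
  rw [integral_eq_sub_of_hasDerivAt (fun y _ ↦ hderiv y)
    (Continuous.intervalIntegrable (by fun_prop) _ _)]
  simp only [c, sin_nat_mul_pi, cos_nat_mul_pi, mul_zero, sin_zero, cos_zero]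
  field_simp
  ring

noncomputable def absCubeCosCoeff (k : ℕ) : ℝ := ∫ y in -π..π, |y| ^ 3 * cos (k * y)

theorem absCubeCosCoeff_of_ne_zero {k : ℕ} (hk : k ≠ 0) :
    absCubeCosCoeff k = 6 * (π ^ 2 * (-1) ^ k / k ^ 2 - 2 * (-1) ^ k / k ^ 4 + 2 / k ^ 4) := by
  rw [absCubeCosCoeff, integral_abs_pow_mul_cos 3 _ pi_pos.le,
    integral_pow_three_mul_cos_nat_mul hk]
  ring

theorem absCubeCosCoeff_succ (i : ℕ) :
    absCubeCosCoeff (i + 1) = -(6 * π ^ 2) * ((-1) ^ i * (1 / ((i : ℝ) + 1) ^ 2))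
      + 12 * ((-1) ^ i * (1 / ((i : ℝ) + 1) ^ 4)) + 12 * (1 / ((i : ℝ) + 1) ^ 4) := by
  rw [absCubeCosCoeff_of_ne_zero i.succ_ne_zero, pow_succ (-1 : ℝ) i]
  push_cast
  ring

theorem integral_abs_pow_three_mul_fejerKernel (m : ℕ) :
    ∫ y in -π..π, |y| ^ 3 * fejerKernel m y
      = π ^ 3 / 4 + 1 / π * ∑ k ∈ Icc 1 m, (1 - k / (m + 1)) * absCubeCosCoeff k := by
  have hmoment : ∫ y in -π..π, |y| ^ 3 = π ^ 4 / 2 := by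
    have h := integral_abs_pow_mul_cos 3 0 pi_pos.le
    simp only [zero_mul, cos_zero, mul_one, integral_pow] at h
    rw [h]
    ring
  calc ∫ y in -π..π, |y| ^ 3 * fejerKernel m y
      = ∫ y in -π..π, (1 / (2 * π) * |y| ^ 3
          + 1 / π * ∑ k ∈ Icc 1 m, (1 - k / (m + 1)) * (|y| ^ 3 * cos (k * y))) := by
        congr 1
        funext y
        simp only [fejerKernel, mul_add, mul_sum]
        congr 1
        · ring
        · exact sum_congr rfl fun k _ ↦ by ring
    _ = 1 / (2 * π) * (∫ y in -π..π, |y| ^ 3)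
          + 1 / π * ∑ k ∈ Icc 1 m, (1 - k / (m + 1)) * absCubeCosCoeff k := by
        rw [integral_add, integral_const_mul, integral_const_mul, integral_finsetSum]
        · simp only [integral_const_mul, absCubeCosCoeff]
        all_goals intros; exact Continuous.intervalIntegrable (by fun_prop) _ _
    _ = _ := by
        rw [hmoment]
        field_simp
        ring

theorem abs_sum_cesaro_mul_sub_le (a : ℕ → ℝ) (A B : ℝ) (m : ℕ) :
    |∑ k ∈ Icc 1 m, (1 - k / (m + 1)) * a k - (A - B / (m + 1))|
      ≤ |A - ∑ k ∈ Icc 1 m, a k| + |B - ∑ k ∈ Icc 1 m, k * a k| / (m + 1) := by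
  have hm : (0 : ℝ) < m + 1 := by positivity
  have hsplit : ∑ k ∈ Icc 1 m, (1 - k / (m + 1)) * a k - (A - B / (m + 1))
      = -(A - ∑ k ∈ Icc 1 m, a k) + (B - ∑ k ∈ Icc 1 m, k * a k) / (m + 1) := by
    simp only [sub_mul, one_mul, sum_sub_distrib, div_mul_eq_mul_div, ← sum_div]
    ring
  rw [hsplit, ← abs_neg (A - _), ← abs_of_pos hm, ← abs_div, abs_of_pos hm]
  exact abs_add_le _ _

theorem abs_neg_sub_sum_absCubeCosCoeff_le {m : ℕ} (hm : m ≠ 0) :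
    |-(π ^ 4 / 4) - ∑ k ∈ Icc 1 m, absCubeCosCoeff k| ≤ (6 * π ^ 2 + 24) / m ^ 2 := by
  have hm1 : (1 : ℝ) ≤ m := by exact_mod_cast Nat.one_le_iff_ne_zero.2 hm
  have hζ2 := hasSum_one_div_succ_pow_of_hasSum two_ne_zero hasSum_zeta_two
  have hζ4 := hasSum_one_div_succ_pow_of_hasSum four_ne_zero hasSum_zeta_four
  have hη2 := (antitone_one_div_succ_pow 2).abs_sub_sum_range_alternating_le
    hζ2.alternating_one_div_succ_pow.tendsto_sum_nat m
  have hη4 := (antitone_one_div_succ_pow 4).abs_sub_sum_range_alternating_le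
    hζ4.alternating_one_div_succ_pow.tendsto_sum_nat m
  have hζ4_tail : |π ^ 4 / 90 - ∑ i ∈ range m, 1 / ((i : ℝ) + 1) ^ 4| ≤ 1 / (m : ℝ) ^ 3 :=
    abs_sub_sum_range_one_div_succ_pow_le (q := 2) hm hζ4
  have hvalue : -(π ^ 4 / 4) = -(6 * π ^ 2) * ((1 - 2 / 2 ^ 2) * (π ^ 2 / 6))
      + 12 * ((1 - 2 / 2 ^ 4) * (π ^ 4 / 90)) + 12 * (π ^ 4 / 90) := by ring
  rw [sum_Icc_one_eq_sum_range_succ, sum_congr rfl fun i _ ↦ absCubeCosCoeff_succ i,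
    sum_add_distrib, sum_add_distrib, ← mul_sum, ← mul_sum, ← mul_sum, hvalue]
  refine (abs_linear_combination_sub_le _ _ _ _ _ _ _ _ _).trans ?_
  rw [abs_neg, abs_of_pos (by positivity : 0 < 6 * π ^ 2),
    abs_of_pos (by norm_num : (0 : ℝ) < 12)]
  calc _ ≤ 6 * π ^ 2 * (1 / (m + 1) ^ 2) + 12 * (1 / (m + 1) ^ 4) + 12 * (1 / m ^ 3) := by
        gcongr 6 * π ^ 2 * ?_ + 12 * ?_ + 12 * ?_
    _ ≤ 6 * π ^ 2 * (1 / m ^ 2) + 12 * (1 / m ^ 4) + 12 * (1 / m ^ 3) := by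
        gcongr <;> linarith
    _ ≤ 6 * π ^ 2 * (1 / m ^ 2) + 12 * (1 / m ^ 2) + 12 * (1 / m ^ 2) := by
        gcongr 6 * π ^ 2 * (1 / m ^ 2) + 12 * ?_ + 12 * ?_ <;>
          exact one_div_pow_le_one_div_pow_of_le hm1 (by norm_num)
    _ = _ := by ring

theorem abs_sub_sum_mul_absCubeCosCoeff_le {m : ℕ} (hm : m ≠ 0) :
    |(21 * zeta3 - 6 * π ^ 2 * log 2) - ∑ k ∈ Icc 1 m, k * absCubeCosCoeff k|
      ≤ (6 * π ^ 2 + 24) / m := by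
  have hm1 : (1 : ℝ) ≤ m := by exact_mod_cast Nat.one_le_iff_ne_zero.2 hm
  have hζ3 : HasSum (fun n : ℕ ↦ 1 / ((n : ℝ) + 1) ^ 3) zeta3 :=
    (hasSum_one_div_succ_pow_of_hasSum three_ne_zero
      (Real.summable_one_div_nat_pow.2 (by norm_num)).hasSum).summable.hasSum
  have hη1 := antitone_one_div_succ.abs_sub_sum_range_alternating_le
    tendsto_sum_range_alternating_one_div_succ m
  have hη3 := (antitone_one_div_succ_pow 3).abs_sub_sum_range_alternating_le
    hζ3.alternating_one_div_succ_pow.tendsto_sum_nat m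
  have hζ3_tail : |zeta3 - ∑ i ∈ range m, 1 / ((i : ℝ) + 1) ^ 3| ≤ 1 / (m : ℝ) ^ 2 :=
    abs_sub_sum_range_one_div_succ_pow_le (q := 1) hm hζ3
  have hcoeff (i : ℕ) : ((i + 1 : ℕ) : ℝ) * absCubeCosCoeff (i + 1)
      = -(6 * π ^ 2) * ((-1) ^ i * (1 / ((i : ℝ) + 1)))
        + 12 * ((-1) ^ i * (1 / ((i : ℝ) + 1) ^ 3)) + 12 * (1 / ((i : ℝ) + 1) ^ 3) := by
    rw [absCubeCosCoeff_succ]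
    push_cast
    field_simp
  have hvalue : 21 * zeta3 - 6 * π ^ 2 * log 2 = -(6 * π ^ 2) * log 2
      + 12 * ((1 - 2 / 2 ^ 3) * zeta3) + 12 * zeta3 := by ring
  rw [sum_Icc_one_eq_sum_range_succ (fun k ↦ (k : ℝ) * absCubeCosCoeff k),
    sum_congr rfl fun i _ ↦ hcoeff i, sum_add_distrib, sum_add_distrib, ← mul_sum, ← mul_sum,
    ← mul_sum, hvalue]
  refine (abs_linear_combination_sub_le _ _ _ _ _ _ _ _ _).trans ?_
  rw [abs_neg, abs_of_pos (by positivity : 0 < 6 * π ^ 2),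
    abs_of_pos (by norm_num : (0 : ℝ) < 12)]
  calc _ ≤ 6 * π ^ 2 * (1 / (m + 1)) + 12 * (1 / (m + 1) ^ 3) + 12 * (1 / m ^ 2) := by
        gcongr 6 * π ^ 2 * ?_ + 12 * ?_ + 12 * ?_
    _ ≤ 6 * π ^ 2 * (1 / m) + 12 * (1 / m ^ 3) + 12 * (1 / m ^ 2) := by
        gcongr <;> linarith
    _ ≤ 6 * π ^ 2 * (1 / m) + 12 * (1 / m ^ 1) + 12 * (1 / m ^ 1) := by
        gcongr 6 * π ^ 2 * (1 / m) + 12 * ?_ + 12 * ?_ <;>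
          exact one_div_pow_le_one_div_pow_of_le hm1 (by norm_num)
    _ = _ := by ring

theorem fejerKernel_third_abs_moment :
    ∃ C : ℝ, 0 < C ∧ ∀ m : ℕ, 1 ≤ m →
      |(∫ y in (-Real.pi)..Real.pi, |y| ^ 3 * fejerKernel m y)
          - (6 * Real.pi * Real.log 2 - 21 * zeta3 / Real.pi) / (m + 1)|
        ≤ C / (m : ℝ) ^ 2 := by
  refine ⟨2 * (6 * π ^ 2 + 24) / π, by positivity, fun m hm ↦ ?_⟩
  have hA := abs_neg_sub_sum_absCubeCosCoeff_le (m := m) (by omega)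
  have hB := abs_sub_sum_mul_absCubeCosCoeff_le (m := m) (by omega)
  have hcesaro := abs_sum_cesaro_mul_sub_le absCubeCosCoeff (-(π ^ 4 / 4))
    (21 * zeta3 - 6 * π ^ 2 * log 2) m
  have hexpand : (∫ y in -π..π, |y| ^ 3 * fejerKernel m y)
        - (6 * π * log 2 - 21 * zeta3 / π) / (m + 1)
      = 1 / π * (∑ k ∈ Icc 1 m, (1 - k / (m + 1)) * absCubeCosCoeff k
        - (-(π ^ 4 / 4) - (21 * zeta3 - 6 * π ^ 2 * log 2) / (m + 1))) := by
    rw [integral_abs_pow_three_mul_fejerKernel]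
    field_simp
    ring
  rw [hexpand, abs_mul, abs_of_pos (by positivity)]
  calc _ ≤ 1 / π * ((6 * π ^ 2 + 24) / m ^ 2 + (6 * π ^ 2 + 24) / m / (m + 1)) := by
        gcongr
        exact hcesaro.trans (by gcongr)
    _ ≤ 1 / π * ((6 * π ^ 2 + 24) / m ^ 2 + (6 * π ^ 2 + 24) / m ^ 2) := by
        rw [div_div, sq]
        gcongr
        linarith
    _ = _ := by ring
end

section
/- Define \(\nu_{1,m} = 2\pi\int_{-\pi}^{\pi} y\, W_m(y)\, K_m(y)\,dy\), where \(K_m\) is the Fejér kernel and \(W_m(y) = \int_{-\pi}^{y} K_m(s)\,ds\). Then \(\nu_{1,m} = \frac{2\log m}{m+1} + \frac{2(\log 2 + \gamma)}{m+1} + O(m^{-2})\) as \(m\to\infty\), where \(\gamma\) is the Euler–Mascheroni constant. -/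
open Finset

noncomputable def fejerW (m : ℕ) (y : ℝ) : ℝ :=
  ∫ s in (-Real.pi)..y, fejerKernel m s

/-!
Integrating by parts, `∫ y W K = π/2 - (∫ W²)/2`, and
`W(y) = (y + π)/(2π) + π⁻¹ ∑ₖ (aₖ/k) sin(ky)` with the Fejér weights `aₖ = 1 - k/(m+1)`.
Orthogonality of the sines and `∫ (y + π) sin(ky) = -2π(-1)ᵏ/k` give the exact value
`ν = π²/3 + 2 ∑ₖ aₖ(-1)ᵏ/k² - ∑ₖ aₖ²/k²`.
Expanding `aₖ` turns this into partial sums of `∑ (-1)ᵏ/k² = -π²/12`, `∑ (-1)ᵏ/k = -log 2`,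
`∑ 1/k² = π²/6` and the harmonic number `Hₘ = log m + γ + O(1/m)`. Each alternating partial sum
lies within its next term of the limit, the `ζ(2)` tail lies in `[1/(m+1), 1/m]` by telescoping
and cancels `m/(m+1)²` to second order, and the first-order remainders all carry a factor
`1/(m+1)`.
-/

open Real intervalIntegral Filter Topology

theorem integral_cos_int_mul (n : ℤ) :
    ∫ x in -π..π, cos (n * x) = if n = 0 then 2 * π else 0 := by
  split_ifs with hn
  · simp [hn]
    ring
  · have hn' : (n : ℝ) ≠ 0 := Int.cast_ne_zero.mpr hn
    rw [integral_comp_mul_left (fun x => cos x) hn', integral_cos, mul_neg, sin_neg,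
      sin_int_mul_pi]
    simp

theorem integral_sin_nat_mul_mul_sin_nat_mul {j k : ℕ} (hk : k ≠ 0) :
    ∫ x in -π..π, sin (j * x) * sin (k * x) = if j = k then π else 0 := by
  have hprod (x : ℝ) : sin (j * x) * sin (k * x)
      = (cos (((j - k : ℤ) : ℝ) * x) - cos (((j + k : ℤ) : ℝ) * x)) / 2 := by
    push_cast
    rw [sub_mul, add_mul, cos_sub, cos_add]
    ring
  simp_rw [hprod]
  have hjk : (j + k : ℤ) ≠ 0 := by omega
  rw [integral_div, integral_sub (Continuous.intervalIntegrable (by fun_prop) _ _)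
    (Continuous.intervalIntegrable (by fun_prop) _ _), integral_cos_int_mul,
    integral_cos_int_mul, if_neg hjk]
  by_cases h : j = k
  · simp [h]
  · simp [h, sub_eq_zero]

theorem integral_add_pi_mul_sin_nat_mul {k : ℕ} (hk : k ≠ 0) :
    ∫ y in -π..π, (y + π) * sin (k * y) = -2 * π * (-1) ^ k / k := by
  have hk' : (k : ℝ) ≠ 0 := Nat.cast_ne_zero.mpr hk
  have hF (y : ℝ) : HasDerivAt (fun y => sin (k * y) / k ^ 2 - (y + π) * cos (k * y) / k)
      ((y + π) * sin (k * y)) y := by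
    have hlin := (hasDerivAt_id' y).const_mul (k : ℝ)
    refine ((hlin.sin.div_const _).fun_sub ((((hasDerivAt_id' y).add_const π).fun_mul
      hlin.cos).div_const _)).congr_deriv ?_
    field_simp
    ring
  rw [integral_eq_sub_of_hasDerivAt (fun y _ => hF y)
    (Continuous.intervalIntegrable (by fun_prop) _ _)]
  simp only [sin_nat_mul_pi, zero_div, cos_nat_mul_pi, zero_sub, mul_neg, sin_neg, neg_zero,
    neg_add_cancel, cos_neg, zero_mul, sub_self, sub_zero, neg_mul]
  field_simp
  ring

theorem integral_add_pi_mul_sum_sin {s : Finset ℕ} (hs : 0 ∉ s) (b : ℕ → ℝ) :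
    ∫ y in -π..π, (y + π) * ∑ k ∈ s, b k * sin (k * y)
      = -2 * π * ∑ k ∈ s, b k * (-1) ^ k / k := by
  simp_rw [mul_sum]
  rw [integral_finsetSum fun k _ => Continuous.intervalIntegrable (by fun_prop) _ _]
  refine sum_congr rfl fun k hk => ?_
  simp_rw [mul_left_comm _ (b k)]
  rw [integral_const_mul, integral_add_pi_mul_sin_nat_mul (ne_of_mem_of_not_mem hk hs)]
  ring

theorem integral_sum_sin_sq {s : Finset ℕ} (hs : 0 ∉ s) (b : ℕ → ℝ) :
    ∫ y in -π..π, (∑ k ∈ s, b k * sin (k * y)) ^ 2 = π * ∑ k ∈ s, b k ^ 2 := by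
  simp_rw [sq, sum_mul_sum]
  rw [integral_finsetSum fun j _ => Continuous.intervalIntegrable (by fun_prop) _ _, mul_sum]
  refine sum_congr rfl fun j hj => ?_
  rw [integral_finsetSum fun k _ => Continuous.intervalIntegrable (by fun_prop) _ _]
  simp_rw [mul_mul_mul_comm (b j)]
  rw [sum_congr rfl fun k hk => by
    rw [integral_const_mul, integral_sin_nat_mul_mul_sin_nat_mul (ne_of_mem_of_not_mem hk hs)]]
  simp_rw [mul_ite, mul_zero]
  rw [sum_ite_eq, if_pos hj]
  ring

noncomputable def fejerCoeff (m k : ℕ) : ℝ := 1 - k / (m + 1)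

theorem continuous_fejerKernel (m : ℕ) : Continuous (fejerKernel m) := by
  unfold fejerKernel
  fun_prop

theorem fejerW_eq (m : ℕ) (y : ℝ) :
    fejerW m y = (y + π) / (2 * π) + (∑ k ∈ Icc 1 m, fejerCoeff m k / k * sin (k * y)) / π := by
  set F := fun y => (y + π) / (2 * π) + (∑ k ∈ Icc 1 m, fejerCoeff m k / k * sin (k * y)) / π
  have hF (x : ℝ) : HasDerivAt F (fejerKernel m x) x := by
    have hsum := HasDerivAt.fun_sum (u := Icc 1 m) fun k _ =>
      ((hasDerivAt_id' x).const_mul (k : ℝ)).sin.const_mul (fejerCoeff m k / k)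
    refine ((((hasDerivAt_id' x).add_const π).div_const (2 * π)).fun_add
      (hsum.div_const π)).congr_deriv ?_
    rw [fejerKernel, sum_congr rfl fun k hk => ?_]
    · ring
    · have : (k : ℝ) ≠ 0 := Nat.cast_ne_zero.mpr (Nat.one_le_iff_ne_zero.mp (mem_Icc.mp hk).1)
      unfold fejerCoeff
      field_simp
  have hF0 : F (-π) = 0 := by simp [F, sin_nat_mul_pi]
  rw [fejerW, integral_eq_sub_of_hasDerivAt (fun x _ => hF x)
    ((continuous_fejerKernel m).intervalIntegrable _ _), hF0, sub_zero]

theorem hasDerivAt_fejerW (m : ℕ) (y : ℝ) : HasDerivAt (fejerW m) (fejerKernel m y) y :=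
  ((continuous_fejerKernel m).integral_hasStrictDerivAt (-π) y).hasDerivAt

theorem fejerW_pi (m : ℕ) : fejerW m π = 1 := by
  simp only [fejerW_eq, sin_nat_mul_pi, mul_zero, sum_const_zero, zero_div, add_zero]
  field_simp
  ring

theorem integral_mul_fejerW_mul_fejerKernel (m : ℕ) :
    ∫ y in -π..π, y * fejerW m y * fejerKernel m y
      = π / 2 - (∫ y in -π..π, fejerW m y ^ 2) / 2 := by
  have hW := hasDerivAt_fejerW m
  have hWc : Continuous (fejerW m) := continuous_iff_continuousAt.mpr fun y => (hW y).continuousAt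
  have hibp := integral_mul_deriv_eq_deriv_mul (a := -π) (b := π) (u := id) (u' := fun _ => 1)
    (v := fun y => fejerW m y ^ 2 / 2) (v' := fun y => fejerW m y * fejerKernel m y)
    (fun y _ => hasDerivAt_id y) (fun y _ => (((hW y).pow 2).div_const 2).congr_deriv (by ring))
    intervalIntegrable_const
    ((hWc.mul (continuous_fejerKernel m)).intervalIntegrable _ _)
  have hW0 : fejerW m (-π) = 0 := integral_same
  simp only [id, one_mul, fejerW_pi, hW0] at hibp
  simp_rw [mul_assoc]
  rw [hibp, integral_div]
  ring

theorem integral_fejerW_sq (m : ℕ) :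
    ∫ y in -π..π, fejerW m y ^ 2
      = 2 * π / 3 - 2 / π * ∑ k ∈ Icc 1 m, fejerCoeff m k / k * (-1) ^ k / k
        + 1 / π * ∑ k ∈ Icc 1 m, (fejerCoeff m k / k) ^ 2 := by
  set S := fun y : ℝ => ∑ k ∈ Icc 1 m, fejerCoeff m k / k * sin (k * y)
  have hW (y : ℝ) : fejerW m y ^ 2
      = ((y + π) ^ 2 + 4 * ((y + π) * S y) + 4 * S y ^ 2) / (4 * π ^ 2) := by
    rw [fejerW_eq]
    simp only [S]
    field_simp
    ring
  have hs : 0 ∉ Icc 1 m := by simp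
  have hA : ∫ y in -π..π, (y + π) ^ 2 = (2 * π) ^ 3 / 3 := by
    rw [integral_comp_add_right (· ^ 2), integral_pow]
    ring
  simp_rw [hW]
  rw [integral_div, integral_add (Continuous.intervalIntegrable (by fun_prop) _ _)
      (Continuous.intervalIntegrable (by fun_prop) _ _),
    integral_add (Continuous.intervalIntegrable (by fun_prop) _ _)
      (Continuous.intervalIntegrable (by fun_prop) _ _),
    integral_const_mul, integral_const_mul, hA, integral_add_pi_mul_sum_sin hs,
    integral_sum_sin_sq hs]
  field_simp
  ring

theorem two_pi_mul_integral_mul_fejerW_mul_fejerKernel (m : ℕ) :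
    2 * π * ∫ y in -π..π, y * fejerW m y * fejerKernel m y
      = π ^ 2 / 3 + 2 * ∑ k ∈ Icc 1 m, fejerCoeff m k / k * (-1) ^ k / k
        - ∑ k ∈ Icc 1 m, (fejerCoeff m k / k) ^ 2 := by
  rw [integral_mul_fejerW_mul_fejerKernel, integral_fejerW_sq]
  field_simp
  ring

theorem sum_Icc_one_eq_sum_range {M : Type*} [AddCommMonoid M] (f : ℕ → M) (n : ℕ) :
    ∑ k ∈ Icc 1 n, f k = ∑ i ∈ range n, f (i + 1) := by
  rw [range_eq_Ico, sum_Ico_add' f 0 n 1, zero_add, Ico_add_one_right_eq_Icc]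

theorem sum_range_two_mul_neg_one_pow_mul {R : Type*} [CommRing R] (f : ℕ → R) (n : ℕ) :
    ∑ i ∈ range (2 * n), (-1) ^ i * f i
      = ∑ i ∈ range (2 * n), f i - 2 * ∑ i ∈ range n, f (2 * i + 1) := by
  induction n with
  | zero => simp
  | succ n ih =>
    rw [show 2 * (n + 1) = 2 * n + 1 + 1 by ring, sum_range_succ, sum_range_succ, ih,
      sum_range_succ, sum_range_succ, sum_range_succ]
    simp only [pow_mul, pow_succ, pow_zero, mul_neg, mul_one, neg_neg, one_pow, one_mul, neg_mul]
    ring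

theorem Antitone.abs_sum_range_alternating_sub_le {f : ℕ → ℝ} {l : ℝ} (hf : Antitone f)
    (hl : Tendsto (fun n => ∑ i ∈ range n, (-1) ^ i * f i) atTop (𝓝 l)) (n : ℕ) :
    |∑ i ∈ range n, (-1) ^ i * f i - l| ≤ f n := by
  obtain ⟨k, rfl | rfl⟩ := Nat.even_or_odd' n
  · have hlow := hf.alternating_series_le_tendsto hl k
    have hupp := hf.tendsto_le_alternating_series hl k
    rw [sum_range_succ, pow_mul, neg_one_sq, one_pow, one_mul] at hupp
    rw [abs_le]
    constructor <;> linarith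
  · have hupp := hf.tendsto_le_alternating_series hl k
    have hlow := hf.alternating_series_le_tendsto hl (k + 1)
    rw [show 2 * (k + 1) = 2 * k + 1 + 1 by ring, sum_range_succ, pow_succ, pow_mul, neg_one_sq,
      one_pow, one_mul, neg_one_mul] at hlow
    rw [abs_le]
    constructor <;> linarith

theorem Antitone.tendsto_alternating_series_of_tendsto_two_mul {f : ℕ → ℝ} {l : ℝ}
    (hf : Antitone f) (h0 : Tendsto f atTop (𝓝 0))
    (hl : Tendsto (fun n => ∑ i ∈ range (2 * n), (-1) ^ i * f i) atTop (𝓝 l)) :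
    Tendsto (fun n => ∑ i ∈ range n, (-1) ^ i * f i) atTop (𝓝 l) := by
  obtain ⟨l', hl'⟩ := hf.tendsto_alternating_series_of_tendsto_zero h0
  rwa [tendsto_nhds_unique (hl'.comp (tendsto_id.const_mul_atTop' two_pos)) hl] at hl'

theorem antitone_one_div_add_one_pow (p : ℕ) : Antitone fun i : ℕ => 1 / ((i : ℝ) + 1) ^ p := by
  intro a b hab
  dsimp only
  gcongr

theorem tendsto_one_div_add_one_pow {p : ℕ} (hp : p ≠ 0) :
    Tendsto (fun i : ℕ => 1 / ((i : ℝ) + 1) ^ p) atTop (𝓝 0) := by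
  simpa [one_div_pow, zero_pow hp] using (tendsto_one_div_add_atTop_nhds_zero_nat (𝕜 := ℝ)).pow p

theorem sum_range_two_mul_neg_one_pow_div_add_one_pow (p n : ℕ) :
    ∑ i ∈ range (2 * n), (-1) ^ i * (1 / ((i : ℝ) + 1) ^ p)
      = ∑ i ∈ range (2 * n), 1 / ((i : ℝ) + 1) ^ p
        - 2 / 2 ^ p * ∑ i ∈ range n, 1 / ((i : ℝ) + 1) ^ p := by
  rw [sum_range_two_mul_neg_one_pow_mul, mul_sum, mul_sum]
  congr 1
  refine sum_congr rfl fun i _ => ?_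
  push_cast
  rw [show (2 * (i : ℝ) + 1 + 1) = 2 * (i + 1) by ring, mul_pow]
  field_simp

theorem tendsto_sum_range_neg_one_pow_div_add_one :
    Tendsto (fun n => ∑ i ∈ range n, (-1) ^ i * (1 / ((i : ℝ) + 1))) atTop (𝓝 (log 2)) := by
  have hH (n : ℕ) : ∑ i ∈ range n, 1 / ((i : ℝ) + 1) ^ 1 = (harmonic n : ℝ) := by
    simp [harmonic, one_div]
  have htwo : Tendsto (fun n : ℕ => 2 * n) atTop atTop := tendsto_id.const_mul_atTop' two_pos
  have hlim := ((tendsto_harmonic_sub_log.comp htwo).sub tendsto_harmonic_sub_log).add_const (log 2)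
  rw [sub_self, zero_add] at hlim
  have heven : Tendsto (fun n => ∑ i ∈ range (2 * n), (-1) ^ i * (1 / ((i : ℝ) + 1) ^ 1))
      atTop (𝓝 (log 2)) := by
    simp_rw [sum_range_two_mul_neg_one_pow_div_add_one_pow, hH]
    refine hlim.congr' ?_
    filter_upwards [eventually_ne_atTop 0] with n hn
    simp only [Function.comp_apply, Nat.cast_mul, Nat.cast_ofNat,
      log_mul two_ne_zero (Nat.cast_ne_zero.mpr hn)]
    ring
  simpa using (antitone_one_div_add_one_pow 1).tendsto_alternating_series_of_tendsto_two_mul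
    (tendsto_one_div_add_one_pow one_ne_zero) heven

theorem hasSum_one_div_add_one_sq : HasSum (fun i : ℕ => 1 / ((i : ℝ) + 1) ^ 2) (π ^ 2 / 6) := by
  simpa using (hasSum_nat_add_iff' 1).mpr hasSum_zeta_two

theorem tendsto_sum_range_neg_one_pow_div_add_one_sq :
    Tendsto (fun n => ∑ i ∈ range n, (-1) ^ i * (1 / ((i : ℝ) + 1) ^ 2)) atTop
      (𝓝 (π ^ 2 / 12)) := by
  refine (antitone_one_div_add_one_pow 2).tendsto_alternating_series_of_tendsto_two_mul
    (tendsto_one_div_add_one_pow two_ne_zero) ?_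
  simp_rw [sum_range_two_mul_neg_one_pow_div_add_one_pow]
  have hZ := hasSum_one_div_add_one_sq.tendsto_sum_nat
  have hlim := (hZ.comp (tendsto_id.const_mul_atTop' two_pos)).sub (hZ.const_mul (2 / 2 ^ 2))
  rwa [show π ^ 2 / 6 - 2 / 2 ^ 2 * (π ^ 2 / 6) = π ^ 2 / 12 by ring] at hlim

theorem harmonic_sub_log_sub_eulerMascheroniConstant_mem {m : ℕ} (hm : m ≠ 0) :
    0 ≤ harmonic m - log m - eulerMascheroniConstant ∧
      harmonic m - log m - eulerMascheroniConstant ≤ 1 / m := by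
  have hlow := eulerMascheroniConstant_lt_eulerMascheroniSeq' m
  have hupp := eulerMascheroniSeq_lt_eulerMascheroniConstant m
  rw [eulerMascheroniSeq', if_neg hm] at hlow
  rw [eulerMascheroniSeq] at hupp
  have hm' : (0 : ℝ) < m := by positivity
  have hlog : log (m + 1) - log m ≤ 1 / m := by
    rw [← log_div (by positivity) hm'.ne']
    have := log_le_sub_one_of_pos (show (0 : ℝ) < (m + 1) / m by positivity)
    rw [add_div, div_self hm'.ne'] at this ⊢
    linarith
  constructor <;> linarith

theorem hasSum_one_div_add_mul_add_add_one {c : ℝ} (hc : 0 < c) :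
    HasSum (fun i : ℕ => 1 / ((c + i) * (c + i + 1))) (1 / c) := by
  have hterm (i : ℕ) : 1 / ((c + i) * (c + i + 1)) = 1 / (c + i) - 1 / (c + (i + 1 : ℕ)) := by
    have : 0 < c + i := by positivity
    push_cast
    field_simp
    ring
  refine (hasSum_iff_tendsto_nat_of_nonneg (fun i => by positivity) _).mpr ?_
  simp_rw [hterm, sum_range_sub' (fun i : ℕ => 1 / (c + i)), Nat.cast_zero, add_zero]
  have h0 : Tendsto (fun n : ℕ => 1 / (c + n)) atTop (𝓝 0) :=
    tendsto_const_nhds.div_atTop (tendsto_atTop_add_const_left _ c tendsto_natCast_atTop_atTop)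
  simpa using tendsto_const_nhds.sub h0

theorem one_div_add_one_le_zeta_two_sub_sum_Icc {m : ℕ} (hm : m ≠ 0) :
    1 / ((m : ℝ) + 1) ≤ π ^ 2 / 6 - ∑ k ∈ Icc 1 m, 1 / (k : ℝ) ^ 2 ∧
      π ^ 2 / 6 - ∑ k ∈ Icc 1 m, 1 / (k : ℝ) ^ 2 ≤ 1 / m := by
  have htail : HasSum (fun i : ℕ => 1 / ((i : ℝ) + (m + 1)) ^ 2)
      (π ^ 2 / 6 - ∑ k ∈ Icc 1 m, 1 / (k : ℝ) ^ 2) := by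
    simpa [sum_range_succ', sum_Icc_one_eq_sum_range] using
      (hasSum_nat_add_iff' (m + 1)).mpr hasSum_zeta_two
  have hm' : (0 : ℝ) < m := by positivity
  constructor
  · refine hasSum_le (fun i => ?_) (hasSum_one_div_add_mul_add_add_one (by positivity)) htail
    apply one_div_le_one_div_of_le (by positivity)
    nlinarith
  · refine hasSum_le (fun i => ?_) htail (hasSum_one_div_add_mul_add_add_one hm')
    apply one_div_le_one_div_of_le (by positivity)
    nlinarith

theorem abs_sum_Icc_neg_one_pow_div_pow_add_le {p : ℕ} {l : ℝ}
    (hl : Tendsto (fun n => ∑ i ∈ range n, (-1) ^ i * (1 / ((i : ℝ) + 1) ^ p)) atTop (𝓝 l))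
    (m : ℕ) : |∑ k ∈ Icc 1 m, (-1) ^ k / (k : ℝ) ^ p + l| ≤ 1 / ((m : ℝ) + 1) ^ p := by
  have h := (antitone_one_div_add_one_pow p).abs_sum_range_alternating_sub_le hl m
  rw [← abs_neg, sum_Icc_one_eq_sum_range]
  convert h using 2
  rw [neg_add, ← sum_neg_distrib]
  push_cast
  congr 1
  refine sum_congr rfl fun i _ => ?_
  ring

theorem sum_fejerCoeff_div_mul_neg_one_pow_div (m : ℕ) :
    ∑ k ∈ Icc 1 m, fejerCoeff m k / k * (-1) ^ k / k
      = ∑ k ∈ Icc 1 m, (-1) ^ k / (k : ℝ) ^ 2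
        - (∑ k ∈ Icc 1 m, (-1) ^ k / (k : ℝ)) / (m + 1) := by
  rw [sum_div, ← sum_sub_distrib]
  refine sum_congr rfl fun k hk => ?_
  have : (k : ℝ) ≠ 0 := Nat.cast_ne_zero.mpr (Nat.one_le_iff_ne_zero.mp (mem_Icc.mp hk).1)
  unfold fejerCoeff
  field_simp

theorem sum_fejerCoeff_div_sq (m : ℕ) :
    ∑ k ∈ Icc 1 m, (fejerCoeff m k / k) ^ 2
      = ∑ k ∈ Icc 1 m, 1 / (k : ℝ) ^ 2 - 2 * harmonic m / (m + 1) + m / (m + 1) ^ 2 := by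
  have hterm : ∀ k ∈ Icc 1 m, (fejerCoeff m k / k) ^ 2
      = 1 / (k : ℝ) ^ 2 - 2 * (k : ℝ)⁻¹ / (m + 1) + 1 / (m + 1) ^ 2 := fun k hk => by
    have : (k : ℝ) ≠ 0 := Nat.cast_ne_zero.mpr (Nat.one_le_iff_ne_zero.mp (mem_Icc.mp hk).1)
    unfold fejerCoeff
    field_simp
    ring
  rw [sum_congr rfl hterm, sum_add_distrib, sum_sub_distrib, ← sum_div, ← mul_sum,
    harmonic_eq_sum_Icc, sum_const, Nat.card_Icc]
  push_cast
  ring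

-- `P`, `Q`, `D`, `T` stand for the remainders of `∑ (-1)ᵏ/k²`, `∑ (-1)ᵏ/k`, `Hₙ - log n - γ`
-- and the tail of `∑ 1/k²`.
theorem abs_remainder_combination_le {n P Q D T : ℝ} (hn : 1 ≤ n) (hP : |P| ≤ 1 / (n + 1) ^ 2)
    (hQ : |Q| ≤ 1 / (n + 1)) (hD : 0 ≤ D ∧ D ≤ 1 / n) (hT : 1 / (n + 1) ≤ T ∧ T ≤ 1 / n) :
    |2 * P - 2 * Q / (n + 1) + 2 * D / (n + 1) + (T - n / (n + 1) ^ 2)| ≤ 8 / n ^ 2 := by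
  set a := 1 / n
  set b := 1 / (n + 1)
  have hb : 0 < b := by positivity
  have hab : a - b = a * b := by simp only [a, b]; field_simp; ring
  have hba : b ≤ a := by simp only [a, b]; gcongr; linarith
  have e1 : 1 / (n + 1) ^ 2 = b ^ 2 := by simp only [b, one_div_pow]
  have e2 : n / (n + 1) ^ 2 = (1 - b) * b := by simp only [b]; field_simp; ring
  have e3 : 8 / n ^ 2 = 8 * a ^ 2 := by simp only [a]; ring
  rw [div_eq_mul_one_div (2 * Q), div_eq_mul_one_div (2 * D), e2, e3]
  rw [e1] at hP
  obtain ⟨hP₁, hP₂⟩ := abs_le.mp hP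
  obtain ⟨hQ₁, hQ₂⟩ := abs_le.mp hQ
  rw [abs_le]
  constructor <;> nlinarith [mul_le_mul_of_nonneg_right hQ₂ hb.le,
    mul_le_mul_of_nonneg_right hQ₁ hb.le, mul_le_mul_of_nonneg_right hD.2 hb.le,
    mul_nonneg hD.1 hb.le]

theorem nu_one_asymp :
    ∃ C : ℝ, 0 < C ∧ ∀ m : ℕ, 1 ≤ m →
      |(2 * Real.pi * ∫ y in (-Real.pi)..Real.pi, y * fejerW m y * fejerKernel m y)
          - 2 * Real.log m / (m + 1)
          - 2 * (Real.log 2 + Real.eulerMascheroniConstant) / (m + 1)|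
        ≤ C / (m : ℝ) ^ 2 := by
  refine ⟨8, by norm_num, fun m hm => ?_⟩
  have hm0 : m ≠ 0 := by omega
  have hQ := abs_sum_Icc_neg_one_pow_div_pow_add_le (p := 1)
    (by simpa using tendsto_sum_range_neg_one_pow_div_add_one) m
  simp only [pow_one] at hQ
  have key := abs_remainder_combination_le (by exact_mod_cast hm)
    (abs_sum_Icc_neg_one_pow_div_pow_add_le tendsto_sum_range_neg_one_pow_div_add_one_sq m) hQ
    (harmonic_sub_log_sub_eulerMascheroniConstant_mem hm0)
    (one_div_add_one_le_zeta_two_sub_sum_Icc hm0)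
  rw [two_pi_mul_integral_mul_fejerW_mul_fejerKernel, sum_fejerCoeff_div_mul_neg_one_pow_div,
    sum_fejerCoeff_div_sq]
  convert key using 2
  ring
end

section
/- Let \(\gamma_m(\theta) = \sum_{k=1}^m (-1)^k (1 - \frac{k}{m+1})^2 \frac{\sin(k\theta)}{k}\). Then for each fixed \(\theta \in (-\pi, \pi)\), \(\gamma_m(\theta) = -\frac{\theta}{2} + O(m^{-1})\) as \(m\to\infty\); consequently \(\gamma_{1,m}(\theta) := \theta + 2\gamma_m(\theta) = O(m^{-1})\). -/
/-!
Put `z = -exp (θ * I)`, so that `‖z‖ = 1`, `z ≠ 1` and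
`(log (1 - z)).im = arg (1 + exp (θ * I)) = θ / 2`. Then `gammaM m θ` is the imaginary part of
`∑ k ∈ Icc 1 m, (1 - k / (m + 1)) ^ 2 * z ^ k / k`, and expanding the square splits this sum as
`∑ z ^ k / k - 2 / (m + 1) * ∑ z ^ k + 1 / (m + 1) ^ 2 * ∑ k * z ^ k`.
The partial sums of `z ^ k` are bounded by `2 / ‖1 - z‖`, so summation by parts bounds the tail
of `∑ z ^ k / k` by `O(1 / m)` and `∑_{k ≤ m} k * z ^ k` by `O(m)`, while Abel's limit theorem
identifies the sum of the series `∑ z ^ k / k` with `-log (1 - z)`.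
-/

open Finset

noncomputable def gammaM (m : ℕ) (θ : ℝ) : ℝ :=
  ∑ k ∈ Finset.Icc 1 m, (-1 : ℝ) ^ k * (1 - (k : ℝ) / (m + 1)) ^ 2 * Real.sin (k * θ) / k

open Filter Topology Complex

section AbelInequality

variable {E : Type*} [SeminormedAddCommGroup E] [NormedSpace ℝ E] {a : ℕ → E} {f : ℕ → ℝ}
  {B : ℝ} {m n : ℕ}

theorem norm_sum_Ico_smul_le_of_norm_sum_range_le (hB : ∀ n, ‖∑ i ∈ range n, a i‖ ≤ B)
    (hmn : m < n) :
    ‖∑ i ∈ Ico m n, f i • a i‖ ≤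
      B * (|f (n - 1)| + |f m| + ∑ i ∈ Ico m (n - 1), |f (i + 1) - f i|) := by
  rw [sum_Ico_by_parts f a hmn, mul_add, mul_add, mul_sum]
  refine (norm_sub_le _ _).trans (add_le_add ((norm_sub_le _ _).trans (add_le_add ?_ ?_))
    ((norm_sum_le _ _).trans (sum_le_sum fun i _ => ?_))) <;>
  · rw [norm_smul, Real.norm_eq_abs, mul_comm]
    exact mul_le_mul_of_nonneg_right (hB _) (abs_nonneg _)

theorem AntitoneOn.norm_sum_Ico_smul_le (hf : AntitoneOn f (Set.Ici m)) (hf0 : 0 ≤ f (n - 1))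
    (hB : ∀ n, ‖∑ i ∈ range n, a i‖ ≤ B) (hmn : m < n) :
    ‖∑ i ∈ Ico m n, f i • a i‖ ≤ 2 * B * f m := by
  have hvar : ∑ i ∈ Ico m (n - 1), |f (i + 1) - f i| = f m - f (n - 1) := by
    rw [← neg_sub, ← sum_Ico_sub f (by omega : m ≤ n - 1), ← sum_neg_distrib]
    refine sum_congr rfl fun i hi => ?_
    have hi : m ≤ i := (mem_Ico.mp hi).1
    rw [abs_of_nonpos (sub_nonpos.mpr (hf hi (by simp; omega) (by omega))), neg_sub]
  have hfm : 0 ≤ f m := hf0.trans (hf (by simp) (by simp; omega) (by omega))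
  have := norm_sum_Ico_smul_le_of_norm_sum_range_le (f := f) hB hmn
  rw [hvar, abs_of_nonneg hf0, abs_of_nonneg hfm] at this
  linarith

theorem Monotone.norm_sum_Ico_smul_le (hf : Monotone f) (hf0 : 0 ≤ f m)
    (hB : ∀ n, ‖∑ i ∈ range n, a i‖ ≤ B) (hmn : m < n) :
    ‖∑ i ∈ Ico m n, f i • a i‖ ≤ 2 * B * f (n - 1) := by
  have hvar : ∑ i ∈ Ico m (n - 1), |f (i + 1) - f i| = f (n - 1) - f m := by
    rw [← sum_Ico_sub f (by omega : m ≤ n - 1)]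
    exact sum_congr rfl fun i _ => abs_of_nonneg (sub_nonneg.mpr (hf (Nat.le_succ i)))
  have hfn : 0 ≤ f (n - 1) := hf0.trans (hf (by omega))
  have := norm_sum_Ico_smul_le_of_norm_sum_range_le (f := f) hB hmn
  rw [hvar, abs_of_nonneg hf0, abs_of_nonneg hfn] at this
  linarith

end AbelInequality

theorem norm_geom_sum_Ico_le {𝕜 : Type*} [NormedDivisionRing 𝕜] {z : 𝕜} (hz : ‖z‖ ≤ 1)
    (hz1 : z ≠ 1) (m n : ℕ) : ‖∑ i ∈ Ico m n, z ^ i‖ ≤ 2 / ‖1 - z‖ := by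
  have hpos : 0 < ‖1 - z‖ := norm_pos_iff.mpr (sub_ne_zero.mpr hz1.symm)
  rcases le_or_gt m n with hmn | hmn
  · rw [geom_sum_Ico hz1 hmn, norm_div, ← norm_neg (z - 1), neg_sub]
    gcongr
    calc ‖z ^ n - z ^ m‖ ≤ ‖z ^ n‖ + ‖z ^ m‖ := norm_sub_le _ _
      _ ≤ 1 + 1 := by rw [norm_pow, norm_pow]; gcongr <;> exact pow_le_one₀ (norm_nonneg _) hz
      _ = 2 := one_add_one_eq_two
  · rw [Ico_eq_empty_of_le hmn.le, sum_empty, norm_zero]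
    positivity

theorem norm_geom_sum_le {𝕜 : Type*} [NormedDivisionRing 𝕜] {z : 𝕜} (hz : ‖z‖ ≤ 1)
    (hz1 : z ≠ 1) (n : ℕ) : ‖∑ i ∈ range n, z ^ i‖ ≤ 2 / ‖1 - z‖ := by
  simpa only [range_eq_Ico] using norm_geom_sum_Ico_le hz hz1 0 n

theorem sum_riesz_pow_div_eq (z : ℂ) (m : ℕ) :
    ∑ k ∈ Icc 1 m, (1 - (k : ℂ) / (m + 1)) ^ 2 * z ^ k / k =
      ∑ k ∈ Icc 1 m, z ^ k / k - 2 / (m + 1) * ∑ k ∈ Icc 1 m, z ^ k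
        + 1 / (m + 1) ^ 2 * ∑ k ∈ Icc 1 m, (k : ℝ) • z ^ k := by
  rw [mul_sum, mul_sum, ← sum_sub_distrib, ← sum_add_distrib]
  refine sum_congr rfl fun k hk => ?_
  have hk : (k : ℂ) ≠ 0 := Nat.cast_ne_zero.mpr (by simp at hk; omega)
  have hm1 : (m : ℂ) + 1 ≠ 0 := by exact_mod_cast m.succ_ne_zero
  rw [real_smul, ofReal_natCast]
  field_simp
  ring

section LogSeries

variable {z : ℂ}

theorem one_sub_mem_slitPlane_of_norm_le_one (hz : ‖z‖ ≤ 1) (hz1 : z ≠ 1) :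
    1 - z ∈ slitPlane := by
  rw [mem_slitPlane_iff, sub_re, one_re, sub_im, one_im, zero_sub, neg_ne_zero, sub_pos]
  by_contra! h
  obtain ⟨hre, him⟩ := h
  refine hz1 (Complex.ext (le_antisymm ?_ hre) him)
  exact (re_le_norm z).trans hz

theorem norm_sum_Ico_pow_div_le (hz : ‖z‖ ≤ 1) (hz1 : z ≠ 1) {m n : ℕ} (hm : 0 < m)
    (hmn : m < n) : ‖∑ i ∈ Ico m n, z ^ i / i‖ ≤ 4 / (‖1 - z‖ * m) := by
  have hanti : AntitoneOn (fun i : ℕ => (i : ℝ)⁻¹) (Set.Ici m) := fun i hi j _ hij =>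
    inv_anti₀ (by exact_mod_cast hm.trans_le hi) (by exact_mod_cast hij)
  have := hanti.norm_sum_Ico_smul_le (inv_nonneg.mpr (Nat.cast_nonneg _))
    (norm_geom_sum_le hz hz1) hmn
  simp only [real_smul, ofReal_inv, ofReal_natCast, ← div_eq_inv_mul] at this
  convert this using 1
  field_simp
  ring

theorem tendsto_sum_range_pow_div (hz : ‖z‖ ≤ 1) (hz1 : z ≠ 1) :
    Tendsto (fun n => ∑ i ∈ range n, z ^ i / i) atTop (𝓝 (-log (1 - z))) := by
  have hcauchy : CauchySeq fun n => ∑ i ∈ range n, z ^ i / i := by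
    rw [← cauchySeq_shift 1]
    refine cauchySeq_of_le_tendsto_0' (fun k : ℕ => 4 / (‖1 - z‖ * (k + 1))) (fun k n hkn => ?_) ?_
    · rcases hkn.eq_or_lt with rfl | hkn
      · simp only [dist_self]; positivity
      rw [dist_comm, dist_eq_norm, ← sum_Ico_eq_sub _ (by omega)]
      exact_mod_cast norm_sum_Ico_pow_div_le hz hz1 k.succ_pos (by omega)
    · convert tendsto_one_div_add_atTop_nhds_zero_nat.const_mul (4 / ‖1 - z‖) using 2
      · rw [mul_one_div, div_div]
      · rw [mul_zero]
  obtain ⟨l, hl⟩ := cauchySeq_tendsto_of_complete hcauchy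
  suffices Tendsto (fun x : ℂ => -log (1 - x * z)) ((𝓝[<] 1).map ofReal) (𝓝 l) by
    have hlog : ContinuousAt (fun x : ℂ => -log (1 - x * z)) 1 :=
      ((continuousAt_const.sub (continuousAt_id.mul continuousAt_const)).clog
        (by simpa using one_sub_mem_slitPlane_of_norm_le_one hz hz1)).neg
    have hofReal : Tendsto ofReal (𝓝[<] 1) (𝓝 1) :=
      (continuous_ofReal.tendsto' 1 1 ofReal_one).mono_left nhdsWithin_le_nhds
    have hlim := hlog.tendsto.mono_left hofReal
    rw [one_mul] at hlim
    rwa [tendsto_nhds_unique this hlim] at hl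
  refine (tendsto_tsum_powerSeries_nhdsWithin_lt hl).congr' ?_
  rw [EventuallyEq, eventually_map]
  filter_upwards [Ioo_mem_nhdsLT one_pos] with t ht
  have htz : ‖(t : ℂ) * z‖ < 1 := by
    rw [norm_mul, norm_real, Real.norm_of_nonneg ht.1.le]
    exact mul_lt_one_of_nonneg_of_lt_one_left ht.1.le ht.2 hz
  refine ((hasSum_taylorSeries_neg_log htz).congr_fun fun n => ?_).tsum_eq
  ring

theorem norm_sum_range_pow_div_add_log_le (hz : ‖z‖ ≤ 1) (hz1 : z ≠ 1) {m : ℕ} (hm : 0 < m) :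
    ‖∑ i ∈ range m, z ^ i / i + log (1 - z)‖ ≤ 4 / (‖1 - z‖ * m) := by
  have hlim := ((tendsto_sum_range_pow_div hz hz1).const_sub (∑ i ∈ range m, z ^ i / i)).norm
  rw [sub_neg_eq_add] at hlim
  refine le_of_tendsto hlim (eventually_atTop.mpr ⟨m + 1, fun n hn => ?_⟩)
  rw [norm_sub_rev, ← sum_Ico_eq_sub _ (by omega)]
  exact norm_sum_Ico_pow_div_le hz hz1 hm (by omega)

theorem norm_sum_riesz_pow_div_add_log_le (hz : ‖z‖ ≤ 1) (hz1 : z ≠ 1) {m : ℕ} (hm : 0 < m) :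
    ‖∑ k ∈ Icc 1 m, (1 - (k : ℂ) / (m + 1)) ^ 2 * z ^ k / k + log (1 - z)‖ ≤
      12 / (‖1 - z‖ * (m + 1)) := by
  have hM : (0 : ℝ) < m + 1 := by positivity
  have hIcc : Icc 1 m = Ico 1 (m + 1) := (Ico_add_one_right_eq_Icc 1 m).symm
  have hlog : ‖∑ k ∈ Icc 1 m, z ^ k / k + log (1 - z)‖ ≤ 4 / (‖1 - z‖ * (m + 1)) := by
    have := norm_sum_range_pow_div_add_log_le hz hz1 m.succ_pos
    rwa [range_eq_Ico, sum_eq_sum_Ico_succ_bot m.succ_pos, Nat.cast_zero, div_zero, zero_add,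
      ← hIcc, Nat.cast_succ] at this
  have hgeom : ‖∑ k ∈ Icc 1 m, z ^ k‖ ≤ 2 / ‖1 - z‖ := hIcc ▸ norm_geom_sum_Ico_le hz hz1 1 _
  have hweighted : ‖∑ k ∈ Icc 1 m, (k : ℝ) • z ^ k‖ ≤ 2 * (2 / ‖1 - z‖) * m := by
    rw [hIcc]
    exact Nat.mono_cast.norm_sum_Ico_smul_le (Nat.cast_nonneg 1)
      (norm_geom_sum_le hz hz1) (by omega)
  have hnorm : ‖(m : ℂ) + 1‖ = m + 1 := by exact_mod_cast Complex.norm_natCast (m + 1)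
  calc _ = ‖∑ k ∈ Icc 1 m, z ^ k / k + log (1 - z) - 2 / (m + 1) * ∑ k ∈ Icc 1 m, z ^ k
        + 1 / (m + 1) ^ 2 * ∑ k ∈ Icc 1 m, (k : ℝ) • z ^ k‖ := by
        rw [sum_riesz_pow_div_eq]; ring_nf
    _ ≤ ‖∑ k ∈ Icc 1 m, z ^ k / k + log (1 - z)‖ + 2 / (m + 1) * ‖∑ k ∈ Icc 1 m, z ^ k‖
        + 1 / (m + 1) ^ 2 * ‖∑ k ∈ Icc 1 m, (k : ℝ) • z ^ k‖ := by
        refine (norm_add_le _ _).trans (add_le_add ((norm_sub_le _ _).trans_eq ?_) (le_of_eq ?_))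
        all_goals simp [hnorm]
    _ ≤ 4 / (‖1 - z‖ * (m + 1)) + 2 / (m + 1) * (2 / ‖1 - z‖)
        + 1 / (m + 1) ^ 2 * (2 * (2 / ‖1 - z‖) * m) := by gcongr
    _ = 4 / (‖1 - z‖ * (m + 1)) * (2 + m / (m + 1)) := by field_simp; ring
    _ ≤ 4 / (‖1 - z‖ * (m + 1)) * (2 + 1) := by
        gcongr
        exact (div_le_one hM).mpr (by linarith)
    _ = 12 / (‖1 - z‖ * (m + 1)) := by ring

end LogSeries

theorem one_add_exp_mul_I (θ : ℝ) :
    1 + exp (θ * I) = (2 * Real.cos (θ / 2) : ℝ) * exp ((θ / 2 : ℝ) * I) := by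
  push_cast
  rw [Complex.cos, mul_div_cancel₀ _ two_ne_zero, add_mul, ← exp_add, ← exp_add]
  ring_nf
  rw [exp_zero, add_comm]

theorem cos_half_pos_of_mem_Ioo {θ : ℝ} (hθ : θ ∈ Set.Ioo (-Real.pi) Real.pi) :
    0 < Real.cos (θ / 2) :=
  Real.cos_pos_of_mem_Ioo ⟨by linarith [hθ.1], by linarith [hθ.2]⟩

theorem one_add_exp_mul_I_ne_zero {θ : ℝ} (hθ : θ ∈ Set.Ioo (-Real.pi) Real.pi) :
    1 + exp (θ * I) ≠ 0 := by
  rw [one_add_exp_mul_I]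
  exact mul_ne_zero (ofReal_ne_zero.mpr (by linarith [cos_half_pos_of_mem_Ioo hθ])) (exp_ne_zero _)

theorem arg_one_add_exp_mul_I {θ : ℝ} (hθ : θ ∈ Set.Ioo (-Real.pi) Real.pi) :
    arg (1 + exp (θ * I)) = θ / 2 := by
  rw [one_add_exp_mul_I, arg_real_mul _ (by linarith [cos_half_pos_of_mem_Ioo hθ]), arg_exp_mul_I,
    toIocMod_eq_self]
  constructor <;> linarith [hθ.1, hθ.2, Real.pi_pos]

theorem gammaM_eq_im (m : ℕ) (θ : ℝ) :
    gammaM m θ = (∑ k ∈ Icc 1 m, (1 - (k : ℂ) / (m + 1)) ^ 2 * (-exp (θ * I)) ^ k / k).im := by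
  rw [gammaM, im_sum]
  refine sum_congr rfl fun k _ => ?_
  have : (1 - (k : ℂ) / (m + 1)) ^ 2 * (-exp (θ * I)) ^ k / k =
      ((-1 : ℝ) ^ k * (1 - (k : ℝ) / (m + 1)) ^ 2 / k : ℝ) * exp ((k * θ : ℝ) * I) := by
    rw [neg_pow, ← exp_nat_mul]
    push_cast
    ring_nf
  rw [this, im_ofReal_mul, exp_ofReal_mul_I_im]
  ring

theorem abs_gammaM_add_half_le {θ : ℝ} (hθ : θ ∈ Set.Ioo (-Real.pi) Real.pi) {m : ℕ}
    (hm : 0 < m) :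
    |gammaM m θ + θ / 2| ≤ 12 / (‖1 + exp (θ * I)‖ * (m + 1)) := by
  have h1z : 1 - -exp (θ * I) = 1 + exp (θ * I) := sub_neg_eq_add _ _
  have hz : ‖-exp (θ * I)‖ ≤ 1 := by rw [norm_neg, norm_exp_ofReal_mul_I]
  have hz1 : -exp (θ * I) ≠ 1 := fun h => one_add_exp_mul_I_ne_zero hθ (by rw [← h1z, h, sub_self])
  have hbound := norm_sum_riesz_pow_div_add_log_le hz hz1 hm
  rw [h1z] at hbound
  refine le_trans ?_ ((abs_im_le_norm _).trans hbound)
  rw [add_im, log_im, arg_one_add_exp_mul_I hθ, gammaM_eq_im]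

theorem gammaM_asymp (θ : ℝ) (hθ : θ ∈ Set.Ioo (-Real.pi) Real.pi) :
    (∃ C : ℝ, 0 < C ∧ ∀ m : ℕ, 1 ≤ m →
      |gammaM m θ + θ / 2| ≤ C / m) ∧
    (∃ C : ℝ, 0 < C ∧ ∀ m : ℕ, 1 ≤ m →
      |θ + 2 * gammaM m θ| ≤ C / m) := by
  have hc : 0 < ‖1 + exp (θ * I)‖ := norm_pos_iff.mpr (one_add_exp_mul_I_ne_zero hθ)
  have hmain : ∀ m : ℕ, 1 ≤ m → |gammaM m θ + θ / 2| ≤ 12 / ‖1 + exp (θ * I)‖ / m := by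
    intro m hm
    have hm' : (0 : ℝ) < m := by exact_mod_cast hm
    calc _ ≤ 12 / (‖1 + exp (θ * I)‖ * (m + 1)) := abs_gammaM_add_half_le hθ hm
      _ ≤ 12 / (‖1 + exp (θ * I)‖ * m) := by gcongr; linarith
      _ = _ := (div_div _ _ _).symm
  refine ⟨⟨_, by positivity, hmain⟩, ⟨2 * (12 / ‖1 + exp (θ * I)‖), by positivity, fun m hm => ?_⟩⟩
  rw [show θ + 2 * gammaM m θ = 2 * (gammaM m θ + θ / 2) by ring, abs_mul, abs_two, mul_div_assoc]
  exact mul_le_mul_of_nonneg_left (hmain m hm) zero_le_two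
end
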